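/- arXiv:2310.02854 — 2 statements merged into one kernel-verified Lean document; each statement's English description precedes it below -/
import Mathlib

section
/- If W1, V1, W2, V2 are real random variables with moment generating functions finite on an open interval around 0, W1 is independent of V1, W2 is independent of V2, W1 and W2 have the same distribution, and W1 + V1 has the same distribution as W2 + V2, then V1 and V2 have the same distribution. -/
open MeasureTheory ProbabilityTheory

/-! The MGF of a sum of independent variables is the product of their MGFs, so
`M_{W₁}(t) M_{V₁}(t) = M_{W₂}(t) M_{V₂}(t)` with `M_{W₁} = M_{W₂}`. Where it is finite the MGF is
positive, so it can be cancelled: `V₁` and `V₂` have the same MGF near `0`, which determines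
their distribution. -/

theorem ProbabilityTheory.IndepFun.mgf_eq_of_identDistrib_add {Ω Ω' : Type*} [MeasurableSpace Ω]
    [MeasurableSpace Ω'] {μ : Measure Ω} {μ' : Measure Ω'} [NeZero μ]
    {X Y : Ω → ℝ} {X' Y' : Ω' → ℝ} {t : ℝ}
    (hXY : IndepFun X Y μ) (hXY' : IndepFun X' Y' μ')
    (hY : AEStronglyMeasurable Y μ) (hY' : AEStronglyMeasurable Y' μ')
    (hX : IdentDistrib X X' μ μ') (hsum : IdentDistrib (X + Y) (X' + Y') μ μ')
    (hint : Integrable (fun ω => Real.exp (t * X ω)) μ) :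
    mgf Y μ t = mgf Y' μ' t := by
  have hprod : mgf X μ t * mgf Y μ t = mgf X μ t * mgf Y' μ' t := by
    rw [← hXY.mgf_add' hX.aemeasurable_fst.aestronglyMeasurable hY, mgf_congr_identDistrib hsum,
      mgf_congr_identDistrib hX, hXY'.mgf_add' hX.aemeasurable_snd.aestronglyMeasurable hY']
  exact mul_left_cancel₀ (mgf_pos' (NeZero.ne μ) hint).ne' hprod

theorem stmt_0_general {Ω : Type*} [MeasurableSpace Ω] (μ : Measure Ω) [IsProbabilityMeasure μ]
    (W1 V1 W2 V2 : Ω → ℝ) (ε : ℝ)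
    (hW1 : Measurable W1) (hV1 : Measurable V1) (hW2 : Measurable W2) (hV2 : Measurable V2)
    (hintW1 : ∀ t ∈ Set.Ioo (-ε) ε, Integrable (fun ω => Real.exp (t * W1 ω)) μ)
    (hdet : ∀ X Y : Ω → ℝ, Measurable X → Measurable Y →
      (∀ t ∈ Set.Ioo (-ε) ε, mgf X μ t = mgf Y μ t) → μ.map X = μ.map Y)
    (hIndep1 : IndepFun W1 V1 μ) (hIndep2 : IndepFun W2 V2 μ)
    (hW : μ.map W1 = μ.map W2)
    (hSum : μ.map (fun ω => W1 ω + V1 ω) = μ.map (fun ω => W2 ω + V2 ω)) :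
    μ.map V1 = μ.map V2 :=
  hdet V1 V2 hV1 hV2 fun t ht =>
    hIndep1.mgf_eq_of_identDistrib_add hIndep2 hV1.aestronglyMeasurable hV2.aestronglyMeasurable
      ⟨hW1.aemeasurable, hW2.aemeasurable, hW⟩
      ⟨(hW1.add hV1).aemeasurable, (hW2.add hV2).aemeasurable, hSum⟩ (hintW1 t ht)

/-- If W1, V1, W2, V2 are real random variables with MGFs finite on an open interval
around 0 (so that MGFs determine distributions, assumed as a hypothesis), W1 ⟂ V1,
W2 ⟂ V2, W1 =d W2, and W1 + V1 =d W2 + V2, then V1 =d V2. -/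
theorem stmt_0 {Ω : Type*} [MeasurableSpace Ω] (μ : Measure Ω) [IsProbabilityMeasure μ]
    (W1 V1 W2 V2 : Ω → ℝ) (ε : ℝ) (hε : 0 < ε)
    (hW1 : Measurable W1) (hV1 : Measurable V1) (hW2 : Measurable W2) (hV2 : Measurable V2)
    (hintW1 : ∀ t ∈ Set.Ioo (-ε) ε, Integrable (fun ω => Real.exp (t * W1 ω)) μ)
    (hintV1 : ∀ t ∈ Set.Ioo (-ε) ε, Integrable (fun ω => Real.exp (t * V1 ω)) μ)
    (hintW2 : ∀ t ∈ Set.Ioo (-ε) ε, Integrable (fun ω => Real.exp (t * W2 ω)) μ)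
    (hintV2 : ∀ t ∈ Set.Ioo (-ε) ε, Integrable (fun ω => Real.exp (t * V2 ω)) μ)
    (hdet : ∀ X Y : Ω → ℝ, Measurable X → Measurable Y →
      (∀ t ∈ Set.Ioo (-ε) ε, mgf X μ t = mgf Y μ t) → μ.map X = μ.map Y)
    (hIndep1 : IndepFun W1 V1 μ) (hIndep2 : IndepFun W2 V2 μ)
    (hW : μ.map W1 = μ.map W2)
    (hSum : μ.map (fun ω => W1 ω + V1 ω) = μ.map (fun ω => W2 ω + V2 ω)) :
    μ.map V1 = μ.map V2 :=
  stmt_0_general μ W1 V1 W2 V2 ε hW1 hV1 hW2 hV2 hintW1 hdet hIndep1 hIndep2 hW hSum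
end

section
/- Let Z_p, Z_q ⊆ ℝ^d be nonempty compact sets, let S ∪ U be a partition of {1,...,d}, and let A ∈ ℝ^d with all components nonnegative. Suppose: (i) for every z ∈ Z_p there exists z' ∈ Z_q with z'_i ≥ z_i for all i and z'_j > z_j for all j ∈ U; (ii) max over z ∈ Z_p of ⟨A, z⟩ equals max over z ∈ Z_q of ⟨A, z⟩. Then A_j = 0 for every j ∈ U. -/
open Matrix Set

lemma dotProduct_lt_dotProduct_of_nonneg_left {R n : Type*} [Semiring R] [PartialOrder R]
    [IsStrictOrderedRing R] [Fintype n] {u v w : n → R} (huv : u ≤ v) (hw : 0 ≤ w) {j : n}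
    (hj : u j < v j) (hwj : 0 < w j) : w ⬝ᵥ u < w ⬝ᵥ v :=
  Finset.sum_lt_sum (fun i _ => mul_le_mul_of_nonneg_left (huv i) (hw i))
    ⟨j, Finset.mem_univ j, mul_lt_mul_of_pos_left hj hwj⟩

theorem IsCompact.exists_forall_le_of_sSup_image_le {α β : Type*}
    [ConditionallyCompleteLinearOrder α] [TopologicalSpace α] [ClosedIciTopology α]
    [TopologicalSpace β] {s t : Set β} (hs : IsCompact s) (hne : s.Nonempty) {f : β → α}
    (hf : ContinuousOn f s) (ht : BddAbove (f '' t)) (hst : sSup (f '' t) ≤ sSup (f '' s)) :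
    ∃ x ∈ s, ∀ y ∈ t, f y ≤ f x := by
  obtain ⟨x, hx, hsup, -⟩ := hs.exists_sSup_image_eq_and_ge hne hf
  exact ⟨x, hx, fun y hy => hsup ▸ (le_csSup ht (mem_image_of_mem f hy)).trans hst⟩

theorem stmt_5_general (d : ℕ) (Zp Zq : Set (Fin d → ℝ)) (hZp : Zp.Nonempty)
    (hcp : IsCompact Zp) (hcq : IsCompact Zq)
    (U : Set (Fin d))
    (A : Fin d → ℝ) (hA : ∀ i, 0 ≤ A i)
    (hvar : ∀ z ∈ Zp, ∃ z' ∈ Zq, (∀ i, z i ≤ z' i) ∧ ∀ j ∈ U, z j < z' j)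
    (hmax : sSup ((fun z => ∑ i, A i * z i) '' Zp) = sSup ((fun z => ∑ i, A i * z i) '' Zq)) :
    ∀ j ∈ U, A j = 0 := by
  have hcont : Continuous (A ⬝ᵥ ·) := continuous_const.dotProduct continuous_id
  obtain ⟨z, hz, hzmax⟩ := hcp.exists_forall_le_of_sSup_image_le hZp hcont.continuousOn
    (hcq.bddAbove_image hcont.continuousOn) hmax.ge
  obtain ⟨z', hz', hle, hlt⟩ := hvar z hz
  intro j hj
  by_contra hAj
  exact (hzmax z' hz').not_gt <|
    dotProduct_lt_dotProduct_of_nonneg_left hle hA (hlt j hj) ((hA j).lt_of_ne' hAj)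

/-- Support variability plus invariance of the maximum of a nonnegative linear functional
forces the functional to vanish on the unstable coordinates U. -/
theorem stmt_5 (d : ℕ) (Zp Zq : Set (Fin d → ℝ)) (hZp : Zp.Nonempty) (hZq : Zq.Nonempty)
    (hcp : IsCompact Zp) (hcq : IsCompact Zq)
    (S U : Set (Fin d)) (hpart : S ∪ U = Set.univ) (hdisj : Disjoint S U)
    (A : Fin d → ℝ) (hA : ∀ i, 0 ≤ A i)
    (hvar : ∀ z ∈ Zp, ∃ z' ∈ Zq, (∀ i, z i ≤ z' i) ∧ ∀ j ∈ U, z j < z' j)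
    (hmax : sSup ((fun z => ∑ i, A i * z i) '' Zp) = sSup ((fun z => ∑ i, A i * z i) '' Zq)) :
    ∀ j ∈ U, A j = 0 :=
  stmt_5_general d Zp Zq hZp hcp hcq U A hA hvar hmax
end
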